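/- arXiv:1912.05648 — 3 statements merged into one kernel-verified Lean document; each statement's English description precedes it below -/
import Mathlib

section
/- Let N ≥ 3, S > 0, τ ∈ [0,1), and c < (1/N)·S^{N/2}/(1−τ)^{(N−2)/2}. Suppose (a_j) and (b_j) are sequences of nonnegative reals such that a_j/2 − (1−τ)·b_j·(N−2)/(2N) → c, a_j − (1−τ)·b_j → 0, and a_j ≥ S·b_j^{(N−2)/N} for all j. Then a_j → 0. -/
open Filter Topology

/-- Algebraic core of the Palais–Smale compactness argument (Lemma 1 of the paper). -/
theorem stmt0 (N : ℕ) (hN : 3 ≤ N) (S : ℝ) (hS : 0 < S) (τ : ℝ) (hτ : τ ∈ Set.Ico (0 : ℝ) 1)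
    (c : ℝ) (hc : c < (1 / N) * S ^ ((N : ℝ) / 2) / (1 - τ) ^ (((N : ℝ) - 2) / 2))
    (a b : ℕ → ℝ) (ha : ∀ j, 0 ≤ a j) (hb : ∀ j, 0 ≤ b j)
    (h1 : Tendsto (fun j => a j / 2 - (1 - τ) * b j * ((N : ℝ) - 2) / (2 * N)) atTop (𝓝 c))
    (h2 : Tendsto (fun j => a j - (1 - τ) * b j) atTop (𝓝 0))
    (h3 : ∀ j, S * (b j) ^ (((N : ℝ) - 2) / N) ≤ a j) :
    Tendsto a atTop (𝓝 0) := by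
  obtain ⟨hτ0, hτ1⟩ := hτ
  have ht : (0:ℝ) < 1 - τ := by linarith
  have hN3 : (3:ℝ) ≤ (N:ℝ) := by exact_mod_cast hN
  have hNpos : (0:ℝ) < (N:ℝ) := by linarith
  have hNne : (N:ℝ) ≠ 0 := ne_of_gt hNpos
  set p : ℝ := ((N:ℝ) - 2) / N with hp
  have hp0 : 0 ≤ p := div_nonneg (by linarith) hNpos.le
  -- limit of a
  have hta : Tendsto a atTop (𝓝 ((N:ℝ) * c)) := by
    have h := ((h1.const_mul ((N:ℝ))).sub (h2.const_mul (((N:ℝ)-2)/2)))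
    have heq : (fun j => (N:ℝ) * (a j / 2 - (1 - τ) * b j * ((N : ℝ) - 2) / (2 * N)) -
        ((N:ℝ)-2)/2 * (a j - (1 - τ) * b j)) = a := by
      funext j; field_simp; ring
    rw [heq] at h
    simpa using h
  have htb : Tendsto b atTop (𝓝 ((N:ℝ) * c / (1 - τ))) := by
    have h := (hta.sub h2).div_const (1 - τ)
    have heq : (fun j => (a j - (a j - (1 - τ) * b j)) / (1 - τ)) = b := by
      funext j; field_simp; ring
    rw [heq] at h
    simpa using h
  have hL0 : 0 ≤ (N:ℝ) * c := ge_of_tendsto hta (Eventually.of_forall ha)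
  rcases eq_or_lt_of_le hL0 with hL | hL
  · rw [← hL] at hta; exact hta
  exfalso
  set L : ℝ := (N:ℝ) * c with hLdef
  set M : ℝ := L / (1 - τ) with hMdef
  have hM : 0 < M := div_pos hL ht
  -- limit of the Sobolev inequality
  have hcont : Tendsto (fun j => S * (b j) ^ p) atTop (𝓝 (S * M ^ p)) := by
    exact (((Real.continuousAt_rpow_const _ p (Or.inr hp0)).tendsto.comp htb).const_mul S)
  have key : S * M ^ p ≤ L := le_of_tendsto_of_tendsto' hcont hta (fun j => h3 j)
  have hMp : 0 < M ^ p := Real.rpow_pos_of_pos hM p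
  have h4 : S ≤ M ^ (1 - p) * (1 - τ) := by
    have : S ≤ M * (1 - τ) / M ^ p := by
      rw [le_div_iff₀ hMp]
      calc S * M ^ p ≤ L := key
        _ = M * (1 - τ) := by rw [hMdef, div_mul_cancel₀ _ ht.ne']
    calc S ≤ M * (1 - τ) / M ^ p := this
      _ = M ^ (1 - p) * (1 - τ) := by
          rw [Real.rpow_sub hM, Real.rpow_one]; ring
  -- raise to the power N/2
  have h5 : S ^ ((N:ℝ)/2) ≤ M * (1 - τ) ^ ((N:ℝ)/2) := by
    have := Real.rpow_le_rpow hS.le h4 (by positivity : (0:ℝ) ≤ (N:ℝ)/2)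
    rwa [Real.mul_rpow (Real.rpow_nonneg hM.le _) ht.le, ← Real.rpow_mul hM.le,
      show (1 - p) * ((N:ℝ)/2) = 1 by rw [hp]; field_simp; ring,
      Real.rpow_one] at this
  have h6 : M * (1 - τ) ^ ((N:ℝ)/2) = L * (1 - τ) ^ (((N:ℝ) - 2)/2) := by
    rw [hMdef, show ((N:ℝ) - 2)/2 = (N:ℝ)/2 - 1 by ring, Real.rpow_sub ht, Real.rpow_one]
    field_simp
  have h7 : (1 / (N:ℝ)) * S ^ ((N:ℝ)/2) / (1 - τ) ^ (((N:ℝ) - 2)/2) ≤ c := by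
    rw [div_le_iff₀ (Real.rpow_pos_of_pos ht _)]
    have : S ^ ((N:ℝ)/2) ≤ L * (1 - τ) ^ (((N:ℝ) - 2)/2) := h6 ▸ h5
    calc (1 / (N:ℝ)) * S ^ ((N:ℝ)/2) ≤ (1 / (N:ℝ)) * (L * (1 - τ) ^ (((N:ℝ) - 2)/2)) := by
          apply mul_le_mul_of_nonneg_left this (by positivity)
      _ = c * (1 - τ) ^ (((N:ℝ) - 2)/2) := by rw [hLdef]; field_simp
  linarith
end

section
/- Let X be a real normed space, E : X → ℝ continuous, S the unit sphere of X, and suppose for each u ∈ S the function φ_u(t) = E(tu) on (0,1] is C¹ and satisfies: φ_u(t) < 0 for all sufficiently small t > 0, and whenever φ_u(t) ≥ 0 one has φ_u'(t) > 0. Then for each u ∈ S there exists a unique T(u) ∈ (0,1] such that φ_u(t) < 0 for 0 < t < T(u) and φ_u(t) > 0 for T(u) < t ≤ 1. -/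
/-!
Let `T` be the infimum of the points of `(0, 1]` where `φ_u ≥ 0` (or `1` if there are none).
Once `φ_u(t₀) ≥ 0`, the function stays nonnegative on `[t₀, 1]`, because `φ_u' > 0` wherever
`φ_u` vanishes; so `φ_u' > 0` on `[t₀, 1]` and `φ_u` is strictly increasing there, hence
positive after `t₀`. This gives the sign pattern around `T`, and two sign changes must coincide
since they would force opposite signs at a point between them.
-/

open Set

theorem pos_of_nonneg_of_hasDerivAt {f f' : ℝ → ℝ} {a b : ℝ}
    (hf : ∀ x ∈ Icc a b, HasDerivAt f (f' x) x)
    (hf' : ∀ x ∈ Icc a b, 0 ≤ f x → 0 < f' x) (hab : a < b) (ha : 0 ≤ f a) : 0 < f b := by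
  have hcont : ContinuousOn f (Icc a b) := fun x hx => (hf x hx).continuousAt.continuousWithinAt
  have hnonneg : ∀ x ∈ Icc a b, 0 ≤ f x := by
    have fence := image_le_of_deriv_right_lt_deriv_boundary (f := fun x => -f x)
      (f' := fun x => -f' x) (B := fun _ => 0) (B' := fun _ => 0) hcont.neg
      (fun x hx => (hf x (Ico_subset_Icc_self hx)).neg.hasDerivWithinAt) (by simpa using ha)
      (fun _ => hasDerivAt_const _ _)
      (fun x hx hx0 => by linarith [hf' x (Ico_subset_Icc_self hx) (by linarith)])
    exact fun x hx => by linarith [fence hx]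
  have hmono : StrictMonoOn f (Icc a b) := by
    refine strictMonoOn_of_deriv_pos (convex_Icc a b) hcont fun x hx => ?_
    rw [interior_Icc] at hx
    have hx' := Ioo_subset_Icc_self hx
    rw [(hf x hx').deriv]
    exact hf' x hx' (hnonneg x hx')
  exact ha.trans_lt (hmono (left_mem_Icc.2 hab.le) (right_mem_Icc.2 hab.le) hab)

section SignChange

variable {f : ℝ → ℝ} {a b : ℝ}

theorem le_of_neg_of_pos {T T' : ℝ} (haT' : a ≤ T') (hTb : T ≤ b)
    (hneg : ∀ t, a < t → t < T → f t < 0) (hpos : ∀ t, T' < t → t ≤ b → 0 < f t) :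
    T ≤ T' := by
  by_contra! hlt
  have h1 := hneg ((T' + T) / 2) (by linarith) (by linarith)
  have h2 := hpos ((T' + T) / 2) (by linarith) (by linarith)
  linarith

theorem existsUnique_sign_change {f' : ℝ → ℝ} (hab : a < b)
    (hf : ∀ t ∈ Ioc a b, HasDerivAt f (f' t) t)
    (hf' : ∀ t ∈ Ioc a b, 0 ≤ f t → 0 < f' t)
    (hsmall : ∃ ε > a, ∀ t, a < t → t < ε → f t < 0) :
    ∃! T, T ∈ Ioc a b ∧ (∀ t, a < t → t < T → f t < 0) ∧ (∀ t, T < t → t ≤ b → 0 < f t) := by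
  obtain ⟨ε, hε, hsmall⟩ := hsmall
  set Z := {t ∈ Ioc a b | 0 ≤ f t}
  have hbdd : BddBelow (insert b Z) := ⟨a, by rintro z (rfl | hz); exacts [hab.le, hz.1.1.le]⟩
  have hmin : min ε b ≤ sInf (insert b Z) := by
    refine le_csInf (insert_nonempty b Z) ?_
    rintro z (rfl | ⟨hz, hz0⟩)
    · exact min_le_right _ _
    · by_contra! hzε
      exact (hsmall z hz.1 (hzε.trans_le (min_le_left _ _))).not_ge hz0
  have hTb : sInf (insert b Z) ≤ b := csInf_le hbdd (mem_insert b Z)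
  have hneg : ∀ t, a < t → t < sInf (insert b Z) → f t < 0 := by
    intro t hat htT
    by_contra! ht
    exact htT.not_ge (csInf_le hbdd (mem_insert_of_mem b ⟨⟨hat, (htT.trans_le hTb).le⟩, ht⟩))
  have hpos : ∀ t, sInf (insert b Z) < t → t ≤ b → 0 < f t := by
    intro t hTt htb
    obtain ⟨z, hz, hzt⟩ := exists_lt_of_csInf_lt (insert_nonempty b Z) hTt
    rcases hz with rfl | ⟨hz, hz0⟩
    · exact absurd htb hzt.not_ge
    · have hsub : Icc z t ⊆ Ioc a b := Icc_subset_Ioc hz.1 htb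
      exact pos_of_nonneg_of_hasDerivAt (fun x hx => hf x (hsub hx))
        (fun x hx => hf' x (hsub hx)) hzt hz0
  have haT : a < sInf (insert b Z) := (lt_min hε hab).trans_le hmin
  refine ⟨sInf (insert b Z), ⟨⟨haT, hTb⟩, hneg, hpos⟩, ?_⟩
  rintro T ⟨hT, hTneg, hTpos⟩
  exact le_antisymm (le_of_neg_of_pos haT.le hT.2 hTneg hpos)
    (le_of_neg_of_pos hT.1.le hTb hneg hTpos)

end SignChange

theorem stmt2_general {X : Type*} [NormedAddCommGroup X] [NormedSpace ℝ X]
    (E : X → ℝ)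
    (φ' : X → ℝ → ℝ)
    (hC1 : ∀ u, ‖u‖ = 1 → (∀ t ∈ Ioc (0 : ℝ) 1, HasDerivAt (fun s : ℝ => E (s • u)) (φ' u t) t)
      ∧ ContinuousOn (φ' u) (Ioc (0 : ℝ) 1))
    (hsmall : ∀ u, ‖u‖ = 1 → ∃ ε > 0, ∀ t : ℝ, 0 < t → t < ε → E (t • u) < 0)
    (hpos : ∀ u, ‖u‖ = 1 → ∀ t ∈ Ioc (0 : ℝ) 1, 0 ≤ E (t • u) → 0 < φ' u t) :
    ∀ u, ‖u‖ = 1 → ∃! T : ℝ, T ∈ Ioc (0 : ℝ) 1 ∧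
      (∀ t : ℝ, 0 < t → t < T → E (t • u) < 0) ∧
      (∀ t : ℝ, T < t → t ≤ 1 → 0 < E (t • u)) := fun u hu =>
  existsUnique_sign_change one_pos (hC1 u hu).1 (hpos u hu) (hsmall u hu)

/-- Fibering-map uniqueness: for each `u` on the unit sphere there is a unique
`T(u) ∈ (0,1]` such that `E(tu) < 0` for `0 < t < T(u)` and `E(tu) > 0` for
`T(u) < t ≤ 1`. -/
theorem stmt2 {X : Type*} [NormedAddCommGroup X] [NormedSpace ℝ X]
    (E : X → ℝ) (hE : Continuous E)
    (φ' : X → ℝ → ℝ)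
    (hC1 : ∀ u, ‖u‖ = 1 → (∀ t ∈ Ioc (0 : ℝ) 1, HasDerivAt (fun s : ℝ => E (s • u)) (φ' u t) t)
      ∧ ContinuousOn (φ' u) (Ioc (0 : ℝ) 1))
    (hsmall : ∀ u, ‖u‖ = 1 → ∃ ε > 0, ∀ t : ℝ, 0 < t → t < ε → E (t • u) < 0)
    (hpos : ∀ u, ‖u‖ = 1 → ∀ t ∈ Ioc (0 : ℝ) 1, 0 ≤ E (t • u) → 0 < φ' u t) :
    ∀ u, ‖u‖ = 1 → ∃! T : ℝ, T ∈ Ioc (0 : ℝ) 1 ∧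
      (∀ t : ℝ, 0 < t → t < T → E (t • u) < 0) ∧
      (∀ t : ℝ, T < t → t ≤ 1 → 0 < E (t • u)) :=
  stmt2_general E φ' hC1 hsmall hpos
end

section
/- With the hypotheses of the previous fibering statement, the map T : S → (0,1] is continuous. In particular, if u_j → u in S and T(u) = 1, then T(u_j) → 1. -/
open Set Filter Topology

/-!
`T v` is pinned between any `t` with `E (t • v) < 0` and any `t` with `E (t • v) > 0`, and
both sign conditions are open in `v` because `E` is continuous; so values of `E (t • u)` of
either sign just below and just above `T u` bound `T v` for all `v` near `u`. When `T u = 1`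
the upper bound is simply `T v ≤ 1`.
-/

def IsZeroCrossing (f : ℝ → ℝ) (τ : ℝ) : Prop :=
  τ ∈ Ioc (0 : ℝ) 1 ∧ (∀ t, 0 < t → t < τ → f t < 0) ∧ ∀ t, τ < t → t ≤ 1 → 0 < f t

namespace IsZeroCrossing

variable {f : ℝ → ℝ} {τ t : ℝ}

theorem le_of_neg (h : IsZeroCrossing f τ) (ht1 : t ≤ 1) (hft : f t < 0) : t ≤ τ :=
  not_lt.1 fun hτt => (h.2.2 t hτt ht1).not_gt hft

theorem le_of_pos (h : IsZeroCrossing f τ) (ht0 : 0 < t) (hft : 0 < f t) : τ ≤ t :=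
  not_lt.1 fun htτ => (h.2.1 t ht0 htτ).not_gt hft

end IsZeroCrossing

section ZeroCrossingContinuity

variable {α : Type*} [TopologicalSpace α] {s : Set α} {g : α → ℝ → ℝ} {T : α → ℝ}

theorem continuousWithinAt_of_isZeroCrossing {u : α} (hu : u ∈ s)
    (hg : ∀ t, ContinuousWithinAt (fun v => g v t) s u)
    (hT : ∀ v ∈ s, IsZeroCrossing (g v) (T v)) :
    ContinuousWithinAt T s u := by
  obtain ⟨⟨hTu0, hTu1⟩, hneg, hpos⟩ := hT u hu
  have eventually_mem : ∀ᶠ v in 𝓝[s] u, v ∈ s := self_mem_nhdsWithin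
  refine tendsto_order.2 ⟨fun a ha => ?_, fun b hb => ?_⟩
  · obtain ⟨t, hat, htT⟩ := exists_between (max_lt ha hTu0)
    have hgt : g u t < 0 := hneg t ((le_max_right a 0).trans_lt hat) htT
    filter_upwards [(hg t).eventually (gt_mem_nhds hgt), eventually_mem] with v hv hvs
    exact (le_max_left a 0).trans_lt (hat.trans_le
      ((hT v hvs).le_of_neg (htT.le.trans hTu1) hv))
  · rcases hTu1.lt_or_eq with hTu1 | hTu1
    · obtain ⟨t, hTt, htb⟩ := exists_between (lt_min hb hTu1)
      have hgt : 0 < g u t := hpos t hTt (htb.le.trans (min_le_right b 1))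
      filter_upwards [(hg t).eventually (lt_mem_nhds hgt), eventually_mem] with v hv hvs
      exact ((hT v hvs).le_of_pos (hTu0.trans hTt) hv).trans_lt
        (htb.trans_le (min_le_left b 1))
    · filter_upwards [eventually_mem] with v hvs
      exact (hT v hvs).1.2.trans_lt (hTu1 ▸ hb)

theorem continuousOn_of_isZeroCrossing (hg : ∀ t, Continuous fun v => g v t)
    (hT : ∀ v ∈ s, IsZeroCrossing (g v) (T v)) : ContinuousOn T s := fun _ hu =>
  continuousWithinAt_of_isZeroCrossing hu (fun t => (hg t).continuousWithinAt) hT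

end ZeroCrossingContinuity

theorem stmt3_general {X : Type*} [NormedAddCommGroup X] [NormedSpace ℝ X]
    (E : X → ℝ) (hE : Continuous E)
    (T : X → ℝ)
    (hT : ∀ u, ‖u‖ = 1 → T u ∈ Ioc (0 : ℝ) 1 ∧
      (∀ t : ℝ, 0 < t → t < T u → E (t • u) < 0) ∧
      (∀ t : ℝ, T u < t → t ≤ 1 → 0 < E (t • u))) :
    ContinuousOn T {u : X | ‖u‖ = 1} ∧
    ∀ (u : X), ‖u‖ = 1 → T u = 1 → ∀ u_j : ℕ → X, (∀ j, ‖u_j j‖ = 1) →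
      Tendsto u_j atTop (𝓝 u) → Tendsto (fun j => T (u_j j)) atTop (𝓝 1) := by
  have hcont : ContinuousOn T {u : X | ‖u‖ = 1} :=
    continuousOn_of_isZeroCrossing (g := fun v t => E (t • v))
      (fun t => hE.comp (continuous_const_smul t)) hT
  refine ⟨hcont, fun u hu hTu u_j hj hlim => ?_⟩
  have hlim_sphere : Tendsto u_j atTop (𝓝[{u : X | ‖u‖ = 1}] u) :=
    tendsto_nhdsWithin_iff.2 ⟨hlim, Eventually.of_forall hj⟩
  simpa only [Function.comp_def, hTu] using (hcont u hu).tendsto.comp hlim_sphere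

/-- Continuity of the fibering map `T : S → (0,1]`; in particular if `u_j → u` on the
unit sphere and `T(u) = 1` then `T(u_j) → 1`. -/
theorem stmt3 {X : Type*} [NormedAddCommGroup X] [NormedSpace ℝ X]
    (E : X → ℝ) (hE : Continuous E)
    (φ' : X → ℝ → ℝ)
    (hC1 : ∀ u, ‖u‖ = 1 → (∀ t ∈ Ioc (0 : ℝ) 1, HasDerivAt (fun s : ℝ => E (s • u)) (φ' u t) t)
      ∧ ContinuousOn (φ' u) (Ioc (0 : ℝ) 1))
    (hsmall : ∀ u, ‖u‖ = 1 → ∃ ε > 0, ∀ t : ℝ, 0 < t → t < ε → E (t • u) < 0)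
    (hpos : ∀ u, ‖u‖ = 1 → ∀ t ∈ Ioc (0 : ℝ) 1, 0 ≤ E (t • u) → 0 < φ' u t)
    (T : X → ℝ)
    (hT : ∀ u, ‖u‖ = 1 → T u ∈ Ioc (0 : ℝ) 1 ∧
      (∀ t : ℝ, 0 < t → t < T u → E (t • u) < 0) ∧
      (∀ t : ℝ, T u < t → t ≤ 1 → 0 < E (t • u))) :
    ContinuousOn T {u : X | ‖u‖ = 1} ∧
    ∀ (u : X), ‖u‖ = 1 → T u = 1 → ∀ u_j : ℕ → X, (∀ j, ‖u_j j‖ = 1) →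
      Tendsto u_j atTop (𝓝 u) → Tendsto (fun j => T (u_j j)) atTop (𝓝 1) :=
  stmt3_general E hE T hT
end
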